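/- arXiv:1612.06767 — 3 statements merged into one kernel-verified Lean document; each statement's English description precedes it below -/
import Mathlib

section
/- For convex bodies K, C in R^n, the Minkowski asymmetries satisfy max{s(K), s(C)} ≤ R(K,C)/r(K,-C), where s(K) = R(-K,K). -/
open Pointwise

/-- A convex body: compact, convex, with nonempty interior. -/
def IsBody {n : ℕ} (K : Set (Fin n → ℝ)) : Prop :=
  Convex ℝ K ∧ IsCompact K ∧ (interior K).Nonempty

/-- Circumradius of `K` w.r.t. `C`: smallest `ρ > 0` with `K` contained in a translate of `ρ • C`. -/
noncomputable def circR {n : ℕ} (K C : Set (Fin n → ℝ)) : ℝ :=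
  sInf {ρ : ℝ | 0 < ρ ∧ ∃ t : Fin n → ℝ, K ⊆ t +ᵥ ρ • C}

/-- Inradius of `K` w.r.t. `C`: largest `ρ ≥ 0` with a translate of `ρ • C` inside `K`. -/
noncomputable def inrad {n : ℕ} (K C : Set (Fin n → ℝ)) : ℝ :=
  sSup {ρ : ℝ | 0 ≤ ρ ∧ ∃ t : Fin n → ℝ, t +ᵥ ρ • C ⊆ K}

/-- Minkowski asymmetry `s(K) = R(-K, K)`. -/
noncomputable def asym {n : ℕ} (K : Set (Fin n → ℝ)) : ℝ := circR (-K) K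

/-- Diameter of `K` w.r.t. `C`: twice the maximal circumradius of a segment with endpoints in `K`. -/
noncomputable def diamC {n : ℕ} (K C : Set (Fin n → ℝ)) : ℝ :=
  sSup {d : ℝ | ∃ x ∈ K, ∃ y ∈ K, d = 2 * circR (segment ℝ x y) C}

/-- `K` is (diametrically) complete w.r.t. `C`. -/
def IsDiamComplete {n : ℕ} (K C : Set (Fin n → ℝ)) : Prop :=
  ∀ K' : Set (Fin n → ℝ), IsBody K' → K ⊂ K' → diamC K C < diamC K' C

/-- `S` is an `n`-simplex: convex hull of `n+1` affinely independent points. -/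
def IsSimplexBody {n : ℕ} (S : Set (Fin n → ℝ)) : Prop :=
  ∃ p : Fin (n + 1) → (Fin n → ℝ), AffineIndependent ℝ p ∧ S = convexHull ℝ (Set.range p)

/-- Support function of `C`. -/
noncomputable def supp {n : ℕ} (C : Set (Fin n → ℝ)) (a : Fin n → ℝ) : ℝ :=
  sSup {r : ℝ | ∃ x ∈ C, r = dotProduct a x}

/-- `A ⊆ₜ B`: `A` is contained in some translate of `B`. -/
def SubsetT {n : ℕ} (A B : Set (Fin n → ℝ)) : Prop := ∃ t : Fin n → ℝ, A ⊆ t +ᵥ B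

/-!
Suppose `K ⊆ t + ρC` and `t' - σC ⊆ K` with `ρ, σ > 0`. Then `-σC` sits in a translate
of `ρC`, so `-C` sits in a translate of `(ρ/σ)C`; and negating the first inclusion puts `-K`
in a translate of `-ρC = (ρ/σ)(-σC)`, hence of `(ρ/σ)K`. Both asymmetries are therefore at
most `ρ/σ`, and passing to the infimum over `ρ` and the supremum over `σ` gives the bound.
-/

lemma le_sInf_div_sSup {a : ℝ} {P Q : Set ℝ} (ha : 0 ≤ a) (hP : P.Nonempty)
    (hP₀ : ∀ ρ ∈ P, 0 ≤ ρ) (hQ₀ : ∀ σ ∈ Q, 0 ≤ σ) (hQ : ∃ σ ∈ Q, 0 < σ)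
    (h : ∀ ρ ∈ P, ∀ σ ∈ Q, 0 < σ → a * σ ≤ ρ) :
    a ≤ sInf P / sSup Q := by
  have hP_inf : 0 ≤ sInf P := Real.sInf_nonneg hP₀
  have hbound : ∀ σ ∈ Q, a * σ ≤ sInf P := by
    intro σ hσ
    rcases (hQ₀ σ hσ).eq_or_lt with hσ₀ | hσ₀
    · rwa [← hσ₀, mul_zero]
    · exact le_csInf hP fun ρ hρ => h ρ hρ σ hσ hσ₀
  rcases ha.eq_or_lt with rfl | ha
  · exact div_nonneg hP_inf (Real.sSup_nonneg hQ₀)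
  obtain ⟨σ₀, hσ₀Q, hσ₀⟩ := hQ
  have hQ_le : ∀ σ ∈ Q, σ ≤ sInf P / a := fun σ hσ =>
    (le_div_iff₀' ha).2 (hbound σ hσ)
  have hQ_sup : 0 < sSup Q := hσ₀.trans_le (le_csSup ⟨_, hQ_le⟩ hσ₀Q)
  rw [le_div_iff₀ hQ_sup, ← le_div_iff₀' ha]
  exact csSup_le ⟨σ₀, hσ₀Q⟩ hQ_le

namespace SubsetT

variable {n : ℕ} {A B D : Set (Fin n → ℝ)}

lemma iff_exists_vadd_subset : SubsetT A B ↔ ∃ t : Fin n → ℝ, t +ᵥ A ⊆ B := by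
  constructor
  · rintro ⟨t, h⟩
    exact ⟨-t, by rwa [Set.vadd_set_subset_iff_subset_neg_vadd_set, neg_neg]⟩
  · rintro ⟨t, h⟩
    exact ⟨-t, Set.vadd_set_subset_iff_subset_neg_vadd_set.mp h⟩

lemma trans (hAB : SubsetT A B) (hBD : SubsetT B D) : SubsetT A D := by
  obtain ⟨t, ht⟩ := hAB
  obtain ⟨s, hs⟩ := hBD
  exact ⟨t + s, ht.trans <| (Set.vadd_set_mono hs).trans_eq (vadd_vadd t s D)⟩

lemma neg (h : SubsetT A B) : SubsetT (-A) (-B) := by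
  obtain ⟨t, ht⟩ := h
  refine ⟨-t, (Set.neg_subset_neg.mpr ht).trans_eq ?_⟩
  ext x
  simp [Set.mem_vadd_set, add_comm]

lemma smul (c : ℝ) (h : SubsetT A B) : SubsetT (c • A) (c • B) := by
  obtain ⟨t, ht⟩ := h
  refine ⟨c • t, (Set.smul_set_mono ht).trans_eq ?_⟩
  ext x
  simp [Set.mem_vadd_set, Set.mem_smul_set]

lemma exists_pos_smul (hA : Bornology.IsBounded A) (hB : (interior B).Nonempty) :
    ∃ σ : ℝ, 0 < σ ∧ SubsetT (σ • A) B := by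
  obtain ⟨x, hx⟩ := hB
  obtain ⟨ε, hε, hball⟩ := Metric.mem_nhds_iff.mp (mem_interior_iff_mem_nhds.mp hx)
  obtain ⟨M, hM, hAM⟩ := hA.subset_ball_lt 0 0
  refine ⟨ε / M, div_pos hε hM, iff_exists_vadd_subset.mpr ⟨x, ?_⟩⟩
  calc x +ᵥ (ε / M) • A ⊆ x +ᵥ (ε / M) • Metric.ball (0 : Fin n → ℝ) M :=
        Set.vadd_set_mono (Set.smul_set_mono hAM)
    _ = Metric.ball x ε := by
        rw [smul_ball (div_pos hε hM).ne', smul_zero, Real.norm_of_nonneg (div_pos hε hM).le,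
          div_mul_cancel₀ ε hM.ne', Metric.vadd_ball, vadd_eq_add, add_zero]
    _ ⊆ B := hball

end SubsetT

section Radii

variable {n : ℕ} {K C : Set (Fin n → ℝ)}

lemma circR_nonneg (K C : Set (Fin n → ℝ)) : 0 ≤ circR K C :=
  Real.sInf_nonneg fun _ hρ => hρ.1.le

lemma circR_le_of_subsetT {ρ : ℝ} (hρ : 0 < ρ) (h : SubsetT K (ρ • C)) : circR K C ≤ ρ :=
  csInf_le ⟨0, fun _ hρ => hρ.1.le⟩ ⟨hρ, h⟩

lemma max_asym_le_div {ρ σ : ℝ} (hρ : 0 < ρ) (hσ : 0 < σ) (hKC : SubsetT K (ρ • C))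
    (hCK : SubsetT (σ • -C) K) : max (asym K) (asym C) ≤ ρ / σ := by
  have hscale : (ρ / σ) • σ • -C = ρ • -C := by
    rw [smul_smul, div_mul_cancel₀ ρ hσ.ne']
  apply max_le <;> refine circR_le_of_subsetT (div_pos hρ hσ) ?_
  · have hneg : SubsetT (-K) (ρ • -C) := by simpa only [Set.smul_set_neg] using hKC.neg
    exact hneg.trans (hscale ▸ hCK.smul (ρ / σ))
  · simpa only [smul_smul, inv_mul_cancel₀ hσ.ne', one_smul, ← div_eq_inv_mul] using
      (hCK.trans hKC).smul σ⁻¹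

end Radii

theorem stmt0 {n : ℕ} (K C : Set (Fin n → ℝ)) (hK : IsBody K) (hC : IsBody C) :
    max (asym K) (asym C) ≤ circR K C / inrad K (-C) := by
  obtain ⟨-, hK_cpt, hK_int⟩ := hK
  obtain ⟨-, hC_cpt, hC_int⟩ := hC
  obtain ⟨δ, hδ, hδK⟩ := SubsetT.exists_pos_smul hK_cpt.isBounded hC_int
  have hKC : SubsetT K (δ⁻¹ • C) := by
    simpa only [smul_smul, inv_mul_cancel₀ hδ.ne', one_smul] using hδK.smul δ⁻¹
  obtain ⟨σ₀, hσ₀, hCK⟩ := SubsetT.exists_pos_smul hC_cpt.isBounded.neg hK_int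
  refine le_sInf_div_sSup (le_max_of_le_left (circR_nonneg _ _)) ⟨δ⁻¹, inv_pos.mpr hδ, hKC⟩
    (fun _ hρ => hρ.1.le) (fun _ hσ => hσ.1)
    ⟨σ₀, ⟨hσ₀.le, SubsetT.iff_exists_vadd_subset.mp hCK⟩, hσ₀⟩ ?_
  rintro ρ ⟨hρ, hKρ⟩ σ ⟨-, hσK⟩ hσ
  exact (le_div_iff₀ hσ).mp <|
    max_asym_le_div hρ hσ hKρ (SubsetT.iff_exists_vadd_subset.mpr hσK)
end

section
/- For convex bodies K, C in R^n, (s(C)+1)/s(C) ≤ R(K,C)/R(K,C−C) ≤ s(C)+1, where C−C is the difference body. -/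
open Pointwise

/-! If `-C ⊆ u + σC`, then `C - C ⊆ u + (σ+1)C` by convexity of `C`, and
`C ⊆ v + σ/(σ+1) (C - C)`. Since `C₁ ⊆ t + μC₂` implies `R(K,C₂) ≤ μ R(K,C₁)`, this gives
`R(K,C) ≤ (σ+1) R(K,C-C)` and `(σ+1) R(K,C-C) ≤ σ R(K,C)`; both are closed conditions in `σ`,
so they survive the passage to the infimum `σ = s(C)`. -/

open Metric Bornology Set Topology

section
variable {n : ℕ}

def coverRadii (K C : Set (Fin n → ℝ)) : Set ℝ :=
  {ρ : ℝ | 0 < ρ ∧ ∃ t : Fin n → ℝ, K ⊆ t +ᵥ ρ • C}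

lemma circR_eq_sInf_coverRadii (K C : Set (Fin n → ℝ)) : circR K C = sInf (coverRadii K C) :=
  rfl

lemma bddBelow_coverRadii (K C : Set (Fin n → ℝ)) : BddBelow (coverRadii K C) :=
  ⟨0, fun _ hρ ↦ hρ.1.le⟩

lemma mem_vadd_smul_set {M E : Type*} [SMul M E] [Add E] {A : Set E} {t x : E} {ρ : M} :
    x ∈ t +ᵥ ρ • A ↔ ∃ a ∈ A, t + ρ • a = x := by
  simp [mem_vadd_set, mem_smul_set]

lemma IsBody.neg {C : Set (Fin n → ℝ)} (hC : IsBody C) : IsBody (-C) := by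
  obtain ⟨hconv, hcomp, ⟨c, hc⟩⟩ := hC
  exact ⟨hconv.neg, hcomp.neg, -c, interior_maximal (neg_subset_neg.2 interior_subset)
    isOpen_interior.neg (neg_mem_neg.2 hc)⟩

lemma IsBody.sub {C : Set (Fin n → ℝ)} (hC : IsBody C) : IsBody (C - C) := by
  obtain ⟨hconv, hcomp, ⟨c, hc⟩⟩ := hC
  exact ⟨hconv.sub hconv, sub_eq_add_neg C C ▸ hcomp.add hcomp.neg, c - c,
    subset_interior_sub_left (sub_mem_sub hc (interior_subset hc))⟩

lemma IsBody.isBounded {K : Set (Fin n → ℝ)} (hK : IsBody K) : IsBounded K :=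
  hK.2.1.isBounded

lemma IsBody.diam_pos (hn : 0 < n) {K : Set (Fin n → ℝ)} (hK : IsBody K) : 0 < diam K := by
  obtain ⟨-, hcomp, ⟨x, hx⟩⟩ := hK
  obtain ⟨r, hr, hball⟩ := Metric.isOpen_iff.1 isOpen_interior x hx
  have : Nonempty (Fin n) := ⟨⟨0, hn⟩⟩
  calc 0 < 2 * r := by positivity
    _ = diam (ball x r) := (diam_ball_eq x hr.le).symm
    _ ≤ diam K := diam_mono (hball.trans interior_subset) hcomp.isBounded

lemma coverRadii_nonempty {K C : Set (Fin n → ℝ)} (hK : IsBounded K)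
    (hC : (interior C).Nonempty) : (coverRadii K C).Nonempty := by
  obtain ⟨c, hc⟩ := hC
  have hV : -c +ᵥ C ∈ 𝓝 (0 : Fin n → ℝ) := by
    simpa using vadd_mem_nhds_vadd (-c) (mem_interior_iff_mem_nhds.1 hc)
  obtain ⟨r, hr, habs⟩ := ((NormedSpace.isVonNBounded_iff ℝ).2 hK hV).exists_pos
  refine ⟨r, hr, -(r • c), fun x hx ↦ ?_⟩
  obtain ⟨_, ⟨y, hy, rfl⟩, rfl⟩ := habs r (by simp [abs_of_pos hr]) hx
  exact mem_vadd_smul_set.2 ⟨y, hy, by simp only [vadd_eq_add, smul_add, smul_neg]⟩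

lemma circR_le_mul_circR {K C₁ C₂ : Set (Fin n → ℝ)} {t : Fin n → ℝ} {μ : ℝ} (hμ : 0 < μ)
    (hsub : C₁ ⊆ t +ᵥ μ • C₂) (hne : (coverRadii K C₁).Nonempty) :
    circR K C₂ ≤ μ * circR K C₁ := by
  have hscale : μ • coverRadii K C₁ ⊆ coverRadii K C₂ := by
    rintro _ ⟨ρ, ⟨hρ, t', ht'⟩, rfl⟩
    refine ⟨mul_pos hμ hρ, t' + ρ • t, fun x hx ↦ ?_⟩
    obtain ⟨c₁, hc₁, rfl⟩ := mem_vadd_smul_set.1 (ht' hx)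
    obtain ⟨c₂, hc₂, rfl⟩ := mem_vadd_smul_set.1 (hsub hc₁)
    exact mem_vadd_smul_set.2 ⟨c₂, hc₂, by simp only [smul_eq_mul]; module⟩
  calc circR K C₂ ≤ sInf (μ • coverRadii K C₁) :=
        csInf_le_csInf (bddBelow_coverRadii K C₂) hne.smul_set hscale
    _ = μ * circR K C₁ := Real.sInf_smul_of_nonneg hμ.le _

lemma diam_le_circR_mul_diam {K C : Set (Fin n → ℝ)} (hC : IsBounded C)
    (hne : (coverRadii K C).Nonempty) : diam K ≤ circR K C * diam C := by
  rw [circR_eq_sInf_coverRadii, mul_comm, ← smul_eq_mul, ← Real.sInf_smul_of_nonneg diam_nonneg]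
  refine le_csInf hne.smul_set ?_
  rintro _ ⟨ρ, ⟨hρ, t, ht⟩, rfl⟩
  calc diam K ≤ diam (t +ᵥ ρ • C) := diam_mono ht ((hC.smul₀ ρ).vadd t)
    _ = diam C * ρ := by rw [diam_vadd, diam_smul₀, Real.norm_of_nonneg hρ.le, mul_comm]

lemma circR_pos (hn : 0 < n) {K C : Set (Fin n → ℝ)} (hK : IsBody K) (hC : IsBody C) :
    0 < circR K C :=
  pos_of_mul_pos_left ((hK.diam_pos hn).trans_le <|
    diam_le_circR_mul_diam hC.isBounded (coverRadii_nonempty hK.isBounded hC.2.2))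
    diam_nonneg

lemma circR_eq_zero_of_fin_zero {K C : Set (Fin 0 → ℝ)} (hC : C.Nonempty) : circR K C = 0 := by
  obtain ⟨c, hc⟩ := hC
  have : coverRadii K C = Ioi 0 := ext fun ρ ↦ ⟨And.left, fun hρ ↦ ⟨hρ, 0, fun x _ ↦ by
    rw [Subsingleton.elim x ((0 : Fin 0 → ℝ) +ᵥ ρ • c)]
    exact vadd_mem_vadd_set (smul_mem_smul_set hc)⟩⟩
  rw [circR_eq_sInf_coverRadii, this, csInf_Ioi]

lemma sub_subset_vadd_smul_of_neg_subset {E : Type*} [AddCommGroup E] [Module ℝ E] {C : Set E}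
    (hC : Convex ℝ C) {u : E} {σ : ℝ} (hσ : 0 ≤ σ) (h : -C ⊆ u +ᵥ σ • C) :
    C - C ⊆ u +ᵥ (σ + 1) • C := by
  rintro _ ⟨a, ha, b, hb, rfl⟩
  obtain ⟨c, hc, hcb⟩ := mem_vadd_smul_set.1 (h (neg_mem_neg.2 hb))
  rw [hC.add_smul hσ zero_le_one, one_smul]
  refine ⟨σ • c + a, add_mem_add (smul_mem_smul_set hc) ha, ?_⟩
  show u + (σ • c + a) = a - b
  rw [← add_assoc, hcb]
  abel

lemma subset_vadd_smul_sub_of_neg_subset {E : Type*} [AddCommGroup E] [Module ℝ E] {C : Set E}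
    {u : E} {σ : ℝ} (hσ : 0 < σ) (h : -C ⊆ u +ᵥ σ • C) :
    C ⊆ -((σ + 1)⁻¹ • u) +ᵥ (σ / (σ + 1)) • (C - C) := by
  intro x hx
  obtain ⟨c, hc, hcx⟩ := mem_vadd_smul_set.1 (h (neg_mem_neg.2 hx))
  refine mem_vadd_smul_set.2 ⟨x - c, sub_mem_sub hx hc, ?_⟩
  have hc' : c = σ⁻¹ • (-x - u) := by rw [← hcx, add_sub_cancel_left, inv_smul_smul₀ hσ.ne']
  subst hc'
  match_scalars <;> field_simp <;> ring

lemma asym_mem_of_coverRadii_subset {C : Set (Fin n → ℝ)} (hC : IsBody C) {T : Set ℝ}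
    (hT : IsClosed T) (h : coverRadii (-C) C ⊆ T) : asym C ∈ T :=
  hT.closure_subset_iff.2 h
    (csInf_mem_closure (coverRadii_nonempty hC.neg.isBounded hC.2.2) (bddBelow_coverRadii _ _))

lemma circR_le_asym_add_one_mul {K C : Set (Fin n → ℝ)} (hK : IsBody K) (hC : IsBody C) :
    circR K C ≤ (asym C + 1) * circR K (C - C) :=
  asym_mem_of_coverRadii_subset (T := {σ | circR K C ≤ (σ + 1) * circR K (C - C)}) hC
    (isClosed_le continuous_const (by fun_prop)) fun _ ⟨hσ, _, hu⟩ ↦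
    circR_le_mul_circR (by positivity) (sub_subset_vadd_smul_of_neg_subset hC.1 hσ.le hu)
      (coverRadii_nonempty hK.isBounded hC.sub.2.2)

lemma asym_add_one_mul_circR_sub_le {K C : Set (Fin n → ℝ)} (hK : IsBody K) (hC : IsBody C) :
    (asym C + 1) * circR K (C - C) ≤ asym C * circR K C :=
  asym_mem_of_coverRadii_subset (T := {σ | (σ + 1) * circR K (C - C) ≤ σ * circR K C}) hC
    (isClosed_le (by fun_prop) (by fun_prop)) fun σ ⟨hσ, _, hu⟩ ↦ by
    have h := circR_le_mul_circR (div_pos hσ (by positivity))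
      (subset_vadd_smul_sub_of_neg_subset hσ hu) (coverRadii_nonempty hK.isBounded hC.2.2)
    rw [div_mul_eq_mul_div, le_div_iff₀ (by positivity)] at h
    rwa [mul_comm] at h

end

theorem stmt1 {n : ℕ} (K C : Set (Fin n → ℝ)) (hK : IsBody K) (hC : IsBody C) :
    (asym C + 1) / asym C ≤ circR K C / circR K (C - C) ∧
    circR K C / circR K (C - C) ≤ asym C + 1 := by
  rcases Nat.eq_zero_or_pos n with rfl | hn
  -- in dimension 0 all radii vanish and both inequalities hold through `x / 0 = 0`
  · obtain ⟨c, hc⟩ := hC.2.2.mono interior_subset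
    have hs : asym C = 0 := circR_eq_zero_of_fin_zero ⟨c, hc⟩
    have hR : circR K (C - C) = 0 := circR_eq_zero_of_fin_zero ⟨c - c, sub_mem_sub hc hc⟩
    simp [hs, hR]
  have hs : 0 < asym C := circR_pos hn hC.neg hC
  have hR := circR_pos hn hK hC.sub
  have hupper := circR_le_asym_add_one_mul hK hC
  have hlower := asym_add_one_mul_circR_sub_le hK hC
  constructor
  · rw [div_le_div_iff₀ hs hR]
    linarith
  · rw [div_le_iff₀ hR]
    linarith
end

section
/- For convex bodies K, C in R^n, (s(C)+1)/s(C) ≤ r(K,C)/r(K,C−C) ≤ s(C)+1. -/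
open Pointwise

/-! If `-C ⊆ t + ρ • C`, convexity gives `C - C = C + (-C) ⊆ t + (ρ + 1) • C`; conversely each
`c ∈ C` satisfies `(ρ + 1) • c + t = ρ • (c - c')` for the `c' ∈ C` with `-c = t + ρ • c'`, so `C`
lies in a translate of `(ρ / (ρ + 1)) • (C - C)`. Containment in a translate of a dilate compares
inradii, which yields `r(K, C) ≤ (ρ + 1) r(K, C - C)` and `(ρ + 1) r(K, C - C) ≤ ρ r(K, C)` for
every such `ρ`; passing to the infimum over `ρ` replaces `ρ` by `s(C)`. -/

open Bornology Topology

section Convex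

variable {E : Type*} [AddCommGroup E] [Module ℝ E] {C : Set E} {ρ : ℝ} {t : E}

theorem Convex.sub_self_subset_vadd_smul (hC : Convex ℝ C) (hρ : 0 ≤ ρ) (h : -C ⊆ t +ᵥ ρ • C) :
    C - C ⊆ t +ᵥ (ρ + 1) • C := by
  rintro _ ⟨a, ha, b, hb, rfl⟩
  obtain ⟨_, ⟨c, hc, rfl⟩, hcb⟩ := h (Set.neg_mem_neg.2 hb)
  rw [add_comm ρ, hC.add_smul zero_le_one hρ, one_smul]
  refine ⟨a + ρ • c, Set.add_mem_add ha (Set.smul_mem_smul_set hc), ?_⟩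
  simp only [vadd_eq_add] at hcb ⊢
  rw [sub_eq_add_neg, ← hcb]
  abel

theorem subset_vadd_smul_sub_self (hρ : 0 < ρ) (h : -C ⊆ t +ᵥ ρ • C) :
    C ⊆ -(ρ + 1)⁻¹ • t +ᵥ (ρ / (ρ + 1)) • (C - C) := by
  intro a ha
  obtain ⟨_, ⟨c, hc, rfl⟩, hca⟩ := h (Set.neg_mem_neg.2 ha)
  refine ⟨(ρ / (ρ + 1)) • (a - c), Set.smul_mem_smul_set (Set.sub_mem_sub ha hc), ?_⟩
  simp only [vadd_eq_add] at hca ⊢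
  obtain rfl : t = -a - ρ • c := eq_sub_of_add_eq hca
  match_scalars <;> field_simp <;> ring

end Convex

section Normed

variable {E : Type*} [NormedAddCommGroup E] [NormedSpace ℝ E] {A B : Set E}

theorem exists_subset_vadd_smul_of_isBounded (hA : IsBounded A) (hB : (interior B).Nonempty) :
    ∃ ρ > (0 : ℝ), ∃ t : E, A ⊆ t +ᵥ ρ • B := by
  obtain ⟨y, hy⟩ := hB
  have h0 : -y +ᵥ B ∈ 𝓝 (0 : E) := by
    simpa using vadd_mem_nhds_vadd (-y) (mem_interior_iff_mem_nhds.1 hy)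
  obtain ⟨r, hr, hrA⟩ := ((NormedSpace.isVonNBounded_iff ℝ).2 hA h0).exists_pos
  refine ⟨r, hr, r • -y, fun a ha => ?_⟩
  obtain ⟨_, ⟨b, hb, rfl⟩, rfl⟩ := hrA r (by rw [Real.norm_of_nonneg hr.le]) ha
  exact ⟨r • b, Set.smul_mem_smul_set hb, by simp [smul_add]⟩

theorem exists_vadd_smul_subset_of_isBounded (hA : IsBounded A) (hB : (interior B).Nonempty) :
    ∃ ρ > (0 : ℝ), ∃ t : E, t +ᵥ ρ • A ⊆ B := by
  obtain ⟨ρ, hρ, t, hAB⟩ := exists_subset_vadd_smul_of_isBounded hA hB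
  refine ⟨ρ⁻¹, inv_pos.2 hρ, -(ρ⁻¹ • t), ?_⟩
  rintro _ ⟨_, ⟨a, ha, rfl⟩, rfl⟩
  obtain ⟨_, ⟨b, hb, rfl⟩, hab⟩ := hAB ha
  simp only [← hab, vadd_eq_add, smul_add, smul_smul, inv_mul_cancel₀ hρ.ne', one_smul,
    neg_add_cancel_left]
  exact hb

theorem Set.nontrivial_of_interior_nonempty [Nontrivial E] (hA : (interior A).Nonempty) :
    A.Nontrivial := by
  obtain ⟨x, hx⟩ := hA
  exact (infinite_of_mem_nhds x (mem_interior_iff_mem_nhds.1 hx)).nontrivial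

end Normed

theorem Set.Nontrivial.sub_self {E : Type*} [AddGroup E] {A : Set E} (hA : A.Nontrivial) :
    (A - A).Nontrivial := by
  obtain ⟨a, ha, b, hb, hab⟩ := hA
  exact ⟨a - a, Set.sub_mem_sub ha ha, a - b, Set.sub_mem_sub ha hb,
    by simpa [eq_comm, sub_eq_zero] using hab⟩

theorem le_csInf_mul {S : Set ℝ} {a b : ℝ} (hS : S.Nonempty) (hb : 0 < b) (h : ∀ ρ ∈ S, a ≤ ρ * b) :
    a ≤ sInf S * b :=
  (div_le_iff₀ hb).1 (le_csInf hS fun ρ hρ => (div_le_iff₀ hb).2 (h ρ hρ))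

section Radii

variable {n : ℕ} {K A B C : Set (Fin n → ℝ)}

def inradSet (K C : Set (Fin n → ℝ)) : Set ℝ :=
  {ρ : ℝ | 0 ≤ ρ ∧ ∃ t : Fin n → ℝ, t +ᵥ ρ • C ⊆ K}

theorem inrad_nonneg : 0 ≤ inrad K C :=
  Real.sSup_nonneg fun _ hρ => hρ.1

theorem inradSet_bddAbove (hK : IsBounded K) (hC : C.Nontrivial) : BddAbove (inradSet K C) := by
  obtain ⟨a, ha, b, hb, hab⟩ := hC
  refine ⟨Metric.diam K / dist a b, fun ρ ⟨hρ, t, ht⟩ => ?_⟩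
  rw [le_div_iff₀ (dist_pos.2 hab)]
  calc ρ * dist a b = dist (t +ᵥ ρ • a) (t +ᵥ ρ • b) := by
        rw [vadd_eq_add, vadd_eq_add, dist_add_left, dist_smul₀, Real.norm_of_nonneg hρ]
    _ ≤ Metric.diam K := Metric.dist_le_diam_of_mem hK
        (ht (Set.vadd_mem_vadd_set (Set.smul_mem_smul_set ha)))
        (ht (Set.vadd_mem_vadd_set (Set.smul_mem_smul_set hb)))

theorem inrad_pos (hK : IsBounded K) (hK' : (interior K).Nonempty) (hC : IsBounded C)
    (hC' : C.Nontrivial) : 0 < inrad K C := by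
  obtain ⟨ρ, hρ, t, ht⟩ := exists_vadd_smul_subset_of_isBounded hC hK'
  exact hρ.trans_le (le_csSup (inradSet_bddAbove hK hC') ⟨hρ.le, t, ht⟩)

theorem inrad_le_mul_inrad {c : ℝ} {t : Fin n → ℝ} (hc : 0 < c) (hBA : B ⊆ t +ᵥ c • A)
    (hB : BddAbove (inradSet K B)) : inrad K A ≤ c * inrad K B := by
  refine Real.sSup_le (fun μ ⟨hμ, x, hx⟩ => ?_) (mul_nonneg hc.le inrad_nonneg)
  suffices μ / c ∈ inradSet K B from (div_le_iff₀' hc).1 (le_csSup hB this)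
  refine ⟨div_nonneg hμ hc.le, x - (μ / c) • t, ?_⟩
  rintro _ ⟨_, ⟨b, hb, rfl⟩, rfl⟩
  obtain ⟨_, ⟨a, ha, rfl⟩, hab⟩ := hBA hb
  convert hx (Set.vadd_mem_vadd_set (Set.smul_mem_smul_set ha)) using 1
  simp only [← hab, vadd_eq_add, smul_add, smul_smul, div_mul_cancel₀ μ hc.ne']
  abel

theorem inrad_of_subsingleton [Subsingleton (Fin n → ℝ)] (hK : K.Nonempty) : inrad K C = 0 := by
  have : inradSet K C = Set.Ici 0 := by
    ext ρ
    simp [inradSet, Subsingleton.eq_univ_of_nonempty hK]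
  rw [inrad, ← inradSet, this]
  exact Real.sSup_of_not_bddAbove (not_bddAbove_Ici 0)

theorem asym_of_subsingleton [Subsingleton (Fin n → ℝ)] (hC : C.Nonempty) : asym C = 0 := by
  have : {ρ : ℝ | 0 < ρ ∧ ∃ t : Fin n → ℝ, -C ⊆ t +ᵥ ρ • C} = Set.Ioi 0 := by
    ext ρ
    simp [Subsingleton.eq_univ_of_nonempty hC.smul_set.vadd_set]
  rw [asym, circR, this, csInf_Ioi]

end Radii

theorem stmt2 {n : ℕ} (K C : Set (Fin n → ℝ)) (hK : IsBody K) (hC : IsBody C) :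
    (asym C + 1) / asym C ≤ inrad K C / inrad K (C - C) ∧
    inrad K C / inrad K (C - C) ≤ asym C + 1 := by
  obtain ⟨-, hKc, hKi⟩ := hK
  obtain ⟨hCconv, hCc, hCi⟩ := hC
  rcases subsingleton_or_nontrivial (Fin n → ℝ) with hE | hE
  · -- in dimension `0` the asymmetry and both inradii are `0`, and `x / 0 = 0`
    have hCne := hCi.mono interior_subset
    rw [asym_of_subsingleton hCne, inrad_of_subsingleton (hKi.mono interior_subset),
      inrad_of_subsingleton (hKi.mono interior_subset)]
    simp
  have hCnt : C.Nontrivial := Set.nontrivial_of_interior_nonempty hCi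
  set S := {ρ : ℝ | 0 < ρ ∧ ∃ t : Fin n → ℝ, -C ⊆ t +ᵥ ρ • C}
  have hS : S.Nonempty :=
    let ⟨ρ, hρ, ht⟩ := exists_subset_vadd_smul_of_isBounded hCc.isBounded.neg hCi
    ⟨ρ, hρ, ht⟩
  set rC := inrad K C
  set rD := inrad K (C - C)
  have hrD : 0 < rD :=
    inrad_pos hKc.isBounded hKi (hCc.isBounded.sub hCc.isBounded) hCnt.sub_self
  have hupper : ∀ ρ ∈ S, rC - rD ≤ ρ * rD := by
    rintro ρ ⟨hρ, t, ht⟩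
    have := inrad_le_mul_inrad (by positivity) (hCconv.sub_self_subset_vadd_smul hρ.le ht)
      (inradSet_bddAbove hKc.isBounded hCnt.sub_self)
    linarith
  have hlower : ∀ ρ ∈ S, rD ≤ ρ * (rC - rD) := by
    rintro ρ ⟨hρ, t, ht⟩
    have := inrad_le_mul_inrad (by positivity) (subset_vadd_smul_sub_self hρ ht)
      (inradSet_bddAbove hKc.isBounded hCnt)
    rw [div_mul_eq_mul_div, le_div_iff₀ (by positivity)] at this
    linarith
  have hgap : 0 < rC - rD := by
    obtain ⟨ρ, hρ⟩ := hS
    nlinarith [hlower ρ hρ, hρ.1]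
  have h₁ : rC - rD ≤ asym C * rD := le_csInf_mul hS hrD hupper
  have h₂ : rD ≤ asym C * (rC - rD) := le_csInf_mul hS hgap hlower
  have hs : 0 < asym C := pos_of_mul_pos_left (hrD.trans_le h₂) hgap.le
  constructor
  · rw [div_le_div_iff₀ hs hrD]
    linarith
  · rw [div_le_iff₀ hrD]
    linarith
end
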